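/- arXiv:math/0405027 — 4 statements merged into one kernel-verified Lean document; each statement's English description precedes it below -/
import Mathlib

section
/- Let k be a field, O a discrete valuation ring with maximal ideal m and residue field containing k, n ≥ 1, and B a k-algebra. Suppose the composite K := O/m → O/mⁿ → O/m is the identity (i.e. O/mⁿ contains a coefficient field K). Then the quotient group (O/mⁿ ⊗_k B)^* / (K ⊗_k B)^* is isomorphic to W^{n-1}_{K ⊗_k B}, via the map sending (x₁,…,x_{n-1}) ∈ W^{n-1}_{K⊗B} to 1 + Σ_{h=1}^{n-1} t̄ₚʰ · xₕ, where tₚ is a uniformizer of O. -/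
/-!
Write `R = O/mⁿ`, `t` for the image of the uniformizer, `A = K ⊗ B` and `S = R ⊗ B`.
Since the kernel of `R → K` is `tR`, and `tʲ z = 0` with `j < n` forces `z ∈ tR`, the coefficient
field `s` writes every element of `R` uniquely as a `t`-adic expansion `∑_{i<n} tⁱ s(aᵢ)`.
Base change along `k → B` preserves this, so every element of `S` is uniquely
`∑_{i<n} tⁱ σ(cᵢ)` with `cᵢ ∈ A`. A unit `u` of `S` therefore factors uniquely as
`σ(c₀) · (1 + ∑_{h≥1} tʰ σ(c₀⁻¹ cₕ))`, where `c₀` is the image of `u` in `A`, hence a unit.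
Finally, `tⁿ = 0` truncates the product of two elements `1 + ∑ tʰ σ(xₕ)` to exactly the Witt law.
-/

open scoped TensorProduct
open scoped Classical

/-- The Witt-type addition `cᵢ = aᵢ + bᵢ + Σ_{h+k=i, h,k≥1} aₕbₖ` on `R^n`
(coordinates indexed `1,…,n` via `Fin n`, `i ↦ i+1`). -/
def wittOp {R : Type*} [CommRing R] {n : ℕ} (a b : Fin n → R) : Fin n → R :=
  fun i => a i + b i +
    ∑ p ∈ Finset.univ.filter
      (fun p : Fin n × Fin n => (p.1.val + 1) + (p.2.val + 1) = i.val + 1),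
      a p.1 * b p.2

section

variable (k : Type*) [Field k] (O : Type*) [CommRing O] [IsDomain O]
  [IsDiscreteValuationRing O] [Algebra k O] (n : ℕ) (tp : O)
  (B : Type*) [CommRing B] [Algebra k B]
  (s : (O ⧸ IsLocalRing.maximalIdeal O) →ₐ[k] (O ⧸ (IsLocalRing.maximalIdeal O) ^ n))

/-- The element `1 + Σ_{h=1}^{n-1} t̄ₚʰ · xₕ` of `(O/mⁿ) ⊗_k B`, where
`x : W^{n-1}_{K ⊗_k B}` and the coefficients `xₕ ∈ K ⊗_k B` are embedded via the
coefficient-field section `s`. -/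
noncomputable def wittToUnitElem
    (x : Fin (n - 1) → ((O ⧸ IsLocalRing.maximalIdeal O) ⊗[k] B)) :
    (O ⧸ (IsLocalRing.maximalIdeal O) ^ n) ⊗[k] B :=
  1 + ∑ h : Fin (n - 1),
    ((Ideal.Quotient.mk ((IsLocalRing.maximalIdeal O) ^ n) tp ^ (h.val + 1)) ⊗ₜ[k] (1 : B)) *
      (Algebra.TensorProduct.map s (AlgHom.id k B)) (x h)

/-- The subgroup `(K ⊗_k B)^*` of `((O/mⁿ) ⊗_k B)^*`, i.e. the image of the units of
`K ⊗_k B` under the coefficient-field embedding. -/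
noncomputable def coeffFieldUnits :
    Subgroup ((O ⧸ (IsLocalRing.maximalIdeal O) ^ n) ⊗[k] B)ˣ :=
  (Units.map (Algebra.TensorProduct.map s (AlgHom.id k B)).toRingHom.toMonoidHom).range

instance : (coeffFieldUnits k O n B s).Normal := by
  constructor
  intro a ha g
  have h : g * a * g⁻¹ = a := by
    rw [mul_comm g a, mul_assoc]
    simp
  rwa [h]

/-- The map `W^{n-1}_{K ⊗_k B} → ((O/mⁿ) ⊗_k B)^* / (K ⊗_k B)^*`,
`x ↦ [1 + Σ_{h=1}^{n-1} t̄ₚʰ · xₕ]` (junk value `1` if the element were not a unit). -/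
noncomputable def wittToQuot
    (x : Fin (n - 1) → ((O ⧸ IsLocalRing.maximalIdeal O) ⊗[k] B)) :
    ((O ⧸ (IsLocalRing.maximalIdeal O) ^ n) ⊗[k] B)ˣ ⧸ coeffFieldUnits k O n B s :=
  if h : IsUnit (wittToUnitElem k O n tp B s x) then QuotientGroup.mk h.unit else 1

def adicExpansion {A S : Type*} [CommRing A] [CommRing S] (σ : A →+* S) (t : S) {n : ℕ}
    (c : Fin n → A) : S :=
  ∑ i : Fin n, t ^ (i : ℕ) * σ (c i)

section Digits

variable {K R : Type*} [CommRing K] [CommRing R] (σ : K →+* R) (π : R →+* K) {t : R}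

theorem exists_eq_adicExpansion_add_pow_mul (hπσ : ∀ a, π (σ a) = a)
    (hker : ∀ z, π z = 0 → ∃ w, z = t * w) (j : ℕ) (z : R) :
    ∃ (a : Fin j → K) (v : R), z = adicExpansion σ t a + t ^ j * v := by
  induction j with
  | zero => exact ⟨Fin.elim0, z, by simp [adicExpansion]⟩
  | succ j ih =>
    obtain ⟨a, v, hz⟩ := ih
    obtain ⟨w, hw⟩ := hker (v - σ (π v)) (by rw [map_sub, hπσ, sub_self])
    refine ⟨Fin.snoc a (π v), w, ?_⟩
    rw [hz]
    simp only [adicExpansion, Fin.sum_univ_castSucc, Fin.snoc_castSucc, Fin.snoc_last,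
      Fin.val_castSucc, Fin.val_last]
    linear_combination t ^ j * hw

theorem eq_zero_of_adicExpansion_eq_pow_mul {n : ℕ} (hπσ : ∀ a, π (σ a) = a) (hπt : π t = 0)
    (hann : ∀ j < n, ∀ z, t ^ j * z = 0 → π z = 0) {j : ℕ} (hj : j ≤ n) (a : Fin j → K)
    (w : R) (h : adicExpansion σ t a = t ^ j * w) : a = 0 := by
  induction j generalizing w with
  | zero => exact Subsingleton.elim _ _
  | succ j ih =>
    simp only [adicExpansion, Fin.sum_univ_castSucc, Fin.val_castSucc, Fin.val_last] at h
    have hinit : Fin.init a = 0 := ih (by omega) _ (t * w - σ (a (Fin.last j))) (by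
      simp only [adicExpansion, Fin.init]
      linear_combination h)
    have hlast : a (Fin.last j) = 0 := by
      have h0 : ∀ i : Fin j, a i.castSucc = 0 := fun i => congrFun hinit i
      simp only [h0, map_zero, mul_zero, Finset.sum_const_zero, zero_add] at h
      simpa [hπσ, hπt] using
        hann j (by omega) (σ (a (Fin.last j)) - t * w) (by linear_combination h)
    ext i
    induction i using Fin.lastCases with
    | last => exact hlast
    | cast i => exact congrFun hinit i

theorem bijective_adicExpansion {n : ℕ} (hπσ : ∀ a, π (σ a) = a) (hπt : π t = 0)
    (hker : ∀ z, π z = 0 → ∃ w, z = t * w)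
    (hann : ∀ j < n, ∀ z, t ^ j * z = 0 → π z = 0) (htn : t ^ n = 0) :
    Function.Bijective (adicExpansion (n := n) σ t) := by
  refine ⟨fun a b hab => ?_, fun z => ?_⟩
  · have h : adicExpansion σ t (a - b) = t ^ n * 0 := by
      simpa only [adicExpansion, Pi.sub_apply, map_sub, mul_sub, Finset.sum_sub_distrib,
        sub_eq_zero, mul_zero] using hab
    exact sub_eq_zero.mp (eq_zero_of_adicExpansion_eq_pow_mul σ π hπσ hπt hann le_rfl _ _ h)
  · obtain ⟨a, v, hz⟩ := exists_eq_adicExpansion_add_pow_mul σ π hπσ hker n z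
    exact ⟨a, by rw [hz, htn, zero_mul, add_zero]⟩

end Digits

theorem bijective_adicExpansion_baseChange {k K R B : Type*} [CommRing k] [CommRing K]
    [CommRing R] [CommRing B] [Algebra k K] [Algebra k R] [Algebra k B] (σ : K →ₐ[k] R) (t : R)
    {n : ℕ} (h : Function.Bijective (adicExpansion (n := n) (σ : K →+* R) t)) :
    Function.Bijective (adicExpansion (n := n)
      (Algebra.TensorProduct.map σ (AlgHom.id k B) : K ⊗[k] B →+* R ⊗[k] B) (t ⊗ₜ 1)) := by
  let ψ : (Fin n → K) →ₗ[k] R :=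
    ∑ i : Fin n, LinearMap.mulLeft k (t ^ (i : ℕ)) ∘ₗ σ.toLinearMap ∘ₗ LinearMap.proj i
  have hψ : Function.Bijective ψ := by
    convert h using 1
    funext a
    simp [ψ, adicExpansion]
  let e := LinearEquiv.ofBijective ψ hψ
  let ρ := TensorProduct.piLeft k B (fun _ : Fin n => K)
  suffices hcomp : ∀ x, adicExpansion
      (Algebra.TensorProduct.map σ (AlgHom.id k B) : K ⊗[k] B →+* R ⊗[k] B) (t ⊗ₜ 1) (ρ x) =
      e.rTensor B x by
    convert (e.rTensor B).bijective.comp ρ.symm.bijective using 1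
    funext c
    rw [Function.comp_apply, ← hcomp, LinearEquiv.apply_symm_apply]
  intro x
  induction x with
  | zero => simp [adicExpansion]
  | tmul a b =>
    simp [ψ, e, ρ, adicExpansion, Algebra.TensorProduct.tmul_pow, TensorProduct.sum_tmul]
  | add x y hx hy =>
    simp only [adicExpansion, map_add, Pi.add_apply, mul_add, Finset.sum_add_distrib] at hx hy ⊢
    rw [hx, hy]

section WittUnits

variable {A S : Type*} [CommRing A] [CommRing S] (σ : A →+* S) (T : S) {m : ℕ}

def wittElem (x : Fin m → A) : S :=
  1 + ∑ h : Fin m, T ^ (h.val + 1) * σ (x h)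

theorem isUnit_wittElem (hT : IsNilpotent T) (x : Fin m → A) : IsUnit (wittElem σ T x) := by
  have hfactor :
      ∑ h : Fin m, T ^ (h.val + 1) * σ (x h) = T * ∑ h : Fin m, T ^ h.val * σ (x h) := by
    simp only [Finset.mul_sum, pow_succ', mul_assoc]
  exact (hfactor ▸ (Commute.all _ _).isNilpotent_mul_right hT).isUnit_one_add

/-- A product `T ^ (a + 1) * T ^ (b + 1)` either is the term `T ^ (h + 1)` with `h = a + b + 1`
of the Witt sum or vanishes because `T ^ (m + 1) = 0`. -/
theorem sum_pow_mul_convolution_eq_mul (hT : T ^ (m + 1) = 0) (x y : Fin m → A) :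
    ∑ h : Fin m, T ^ (h.val + 1) * σ (∑ p ∈ Finset.univ.filter
      (fun p : Fin m × Fin m => (p.1.val + 1) + (p.2.val + 1) = h.val + 1), x p.1 * y p.2) =
    (∑ h : Fin m, T ^ (h.val + 1) * σ (x h)) * ∑ h : Fin m, T ^ (h.val + 1) * σ (y h) := by
  rw [Finset.sum_mul_sum]
  simp only [map_sum, Finset.mul_sum, Finset.sum_filter]
  rw [Finset.sum_comm, Fintype.sum_prod_type]
  refine Finset.sum_congr rfl fun a _ => Finset.sum_congr rfl fun b _ => ?_
  have hprod : T ^ (a.val + 1) * σ (x a) * (T ^ (b.val + 1) * σ (y b)) =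
      T ^ (a.val + b.val + 1 + 1) * σ (x a * y b) := by
    rw [map_mul]; ring
  rw [hprod]
  by_cases hab : a.val + b.val + 1 < m
  · rw [Finset.sum_eq_single ⟨a.val + b.val + 1, hab⟩]
    · simp only [if_pos (show a.val + 1 + (b.val + 1) = a.val + b.val + 1 + 1 by omega)]
    · intro h _ hne
      rw [if_neg (fun hh => hne (Fin.ext (by dsimp only at hh ⊢; omega))), map_zero, mul_zero]
    · simp
  · rw [pow_eq_zero_of_le (by omega) hT, zero_mul]
    exact Finset.sum_eq_zero fun h _ => by rw [if_neg (by dsimp only; omega), map_zero, mul_zero]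

theorem wittElem_wittOp (hT : T ^ (m + 1) = 0) (x y : Fin m → A) :
    wittElem σ T (wittOp x y) = wittElem σ T x * wittElem σ T y := by
  simp only [wittElem, wittOp, map_add, mul_add, Finset.sum_add_distrib,
    sum_pow_mul_convolution_eq_mul σ T hT]
  ring

theorem map_mul_wittElem (c : A) (x : Fin m → A) :
    σ c * wittElem σ T x = adicExpansion σ T (Fin.cons c fun h => c * x h : Fin (m + 1) → A) := by
  simp only [wittElem, adicExpansion, Fin.sum_univ_succ, Fin.cons_zero, Fin.cons_succ,
    Fin.val_zero, Fin.val_succ, pow_zero, one_mul, mul_add, mul_one, Finset.mul_sum, map_mul]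
  congr 1
  exact Finset.sum_congr rfl fun h _ => by ring

noncomputable def wittUnit (hT : T ^ (m + 1) = 0) (x : Fin m → A) : Sˣ :=
  (isUnit_wittElem σ T ⟨m + 1, hT⟩ x).unit

theorem wittUnit_wittOp (hT : T ^ (m + 1) = 0) (x y : Fin m → A) :
    wittUnit σ T hT (wittOp x y) = wittUnit σ T hT x * wittUnit σ T hT y :=
  Units.ext (wittElem_wittOp σ T hT x y)

variable {σ T}

theorem eq_of_map_mul_wittElem_eq (hinj : Function.Injective (adicExpansion (n := m + 1) σ T))
    {c : A} {x y : Fin m → A} (h : σ c * wittElem σ T x = wittElem σ T y) : x = y := by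
  rw [← one_mul (wittElem σ T y), ← map_one σ, map_mul_wittElem, map_mul_wittElem] at h
  obtain ⟨rfl, hxy⟩ := Fin.cons_inj.mp (hinj h)
  simpa using hxy

theorem exists_eq_map_mul_wittElem (hsurj : Function.Surjective (adicExpansion (n := m + 1) σ T))
    (π : S →+* A) (hπσ : ∀ a, π (σ a) = a) (hπT : π T = 0) (u : Sˣ) :
    ∃ (c : Aˣ) (x : Fin m → A), (u : S) = σ c * wittElem σ T x := by
  obtain ⟨d, hd⟩ := hsurj u
  have hπu : π u = d 0 := by
    simp [← hd, adicExpansion, Fin.sum_univ_succ, hπσ, hπT]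
  have hunit : IsUnit (d 0) := hπu ▸ u.isUnit.map π
  refine ⟨hunit.unit, fun h => ↑hunit.unit⁻¹ * d h.succ, ?_⟩
  rw [map_mul_wittElem, ← hd]
  congr with i
  cases i using Fin.cases with
  | zero => simp
  | succ i => simp [← mul_assoc]

theorem bijective_mk_wittUnit (hT : T ^ (m + 1) = 0)
    (hbasis : Function.Bijective (adicExpansion (n := m + 1) σ T))
    (π : S →+* A) (hπσ : ∀ a, π (σ a) = a) (hπT : π T = 0) :
    Function.Bijective fun x : Fin m → A =>
      (QuotientGroup.mk (wittUnit σ T hT x) : Sˣ ⧸ (Units.map σ.toMonoidHom).range) := by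
  refine ⟨fun x y hxy => ?_, fun u => ?_⟩
  · obtain ⟨c, hc⟩ := QuotientGroup.eq.mp hxy
    have h := congrArg Units.val (inv_mul_eq_iff_eq_mul.mp hc.symm)
    exact eq_of_map_mul_wittElem_eq hbasis.1 (c := c) (by simpa [wittUnit, mul_comm] using h.symm)
  · obtain ⟨u, rfl⟩ := QuotientGroup.mk_surjective u
    obtain ⟨c, x, hx⟩ := exists_eq_map_mul_wittElem hbasis.2 π hπσ hπT u
    refine ⟨x, QuotientGroup.eq.mpr ⟨c, eq_inv_mul_iff_mul_eq.mpr (Units.ext ?_)⟩⟩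
    simp [wittUnit, hx, mul_comm]

end WittUnits

section DiscreteValuationRing

variable {O : Type*} [CommRing O] [IsDomain O] [IsDiscreteValuationRing O] {ϖ : O} {n : ℕ}

local notation "𝔪" => IsLocalRing.maximalIdeal O

theorem mk_pow_eq_zero (hϖ : Irreducible ϖ) : Ideal.Quotient.mk (𝔪 ^ n) ϖ ^ n = 0 := by
  rw [← map_pow, Ideal.Quotient.eq_zero_iff_mem, hϖ.maximalIdeal_eq, Ideal.span_singleton_pow]
  exact Ideal.mem_span_singleton_self _

theorem factor_mk_eq_zero (hn : n ≠ 0) (hϖ : Irreducible ϖ) :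
    Ideal.Quotient.factor (Ideal.pow_le_self hn) (Ideal.Quotient.mk (𝔪 ^ n) ϖ) = 0 := by
  rw [Ideal.Quotient.factor_mk, Ideal.Quotient.eq_zero_iff_mem]
  exact (IsLocalRing.mem_maximalIdeal _).mpr hϖ.not_isUnit

theorem exists_eq_mk_mul_of_factor_eq_zero (hn : n ≠ 0) (hϖ : Irreducible ϖ)
    (z : O ⧸ 𝔪 ^ n) (hz : Ideal.Quotient.factor (Ideal.pow_le_self hn) z = 0) :
    ∃ w, z = Ideal.Quotient.mk (𝔪 ^ n) ϖ * w := by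
  obtain ⟨c, rfl⟩ := Ideal.Quotient.mk_surjective z
  rw [Ideal.Quotient.factor_mk, Ideal.Quotient.eq_zero_iff_mem, hϖ.maximalIdeal_eq,
    Ideal.mem_span_singleton'] at hz
  obtain ⟨d, rfl⟩ := hz
  exact ⟨Ideal.Quotient.mk _ d, by rw [map_mul, mul_comm]⟩

theorem factor_eq_zero_of_mk_pow_mul_eq_zero (hn : n ≠ 0) (hϖ : Irreducible ϖ) {j : ℕ}
    (hj : j < n) (z : O ⧸ 𝔪 ^ n) (hz : Ideal.Quotient.mk (𝔪 ^ n) ϖ ^ j * z = 0) :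
    Ideal.Quotient.factor (Ideal.pow_le_self hn) z = 0 := by
  obtain ⟨c, rfl⟩ := Ideal.Quotient.mk_surjective z
  rw [← map_pow, ← map_mul, Ideal.Quotient.eq_zero_iff_mem, hϖ.maximalIdeal_eq,
    Ideal.span_singleton_pow, Ideal.mem_span_singleton'] at hz
  obtain ⟨d, hd⟩ := hz
  have hc : c = ϖ ^ (n - j) * d := by
    refine mul_left_cancel₀ (pow_ne_zero j hϖ.ne_zero) ?_
    rw [← hd, ← mul_assoc, ← pow_add, Nat.add_sub_cancel' hj.le, mul_comm]
  rw [Ideal.Quotient.factor_mk, Ideal.Quotient.eq_zero_iff_mem, hc, hϖ.maximalIdeal_eq]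
  exact Ideal.mul_mem_right _ _
    (Ideal.pow_mem_of_mem _ (Ideal.mem_span_singleton_self ϖ) _ (Nat.sub_pos_of_lt hj))

theorem bijective_adicExpansion_mk (hn : n ≠ 0) (hϖ : Irreducible ϖ)
    (σ : O ⧸ 𝔪 →+* O ⧸ 𝔪 ^ n) (hσ : ∀ a, Ideal.Quotient.factor (Ideal.pow_le_self hn) (σ a) = a) :
    Function.Bijective (adicExpansion (n := n) σ (Ideal.Quotient.mk (𝔪 ^ n) ϖ)) :=
  bijective_adicExpansion σ _ hσ (factor_mk_eq_zero hn hϖ)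
    (exists_eq_mk_mul_of_factor_eq_zero hn hϖ)
    (fun _ hj => factor_eq_zero_of_mk_pow_mul_eq_zero hn hϖ hj) (mk_pow_eq_zero hϖ)

end DiscreteValuationRing

/-- Let `O` be a discrete valuation ring over a field `k` with uniformizer `tₚ`,
maximal ideal `m`, residue field `K = O/m`, let `n ≥ 1`, let `B` be a `k`-algebra, and
suppose `s : K → O/mⁿ` is a coefficient field (a section of the projection `O/mⁿ → K`).
Then the map `W^{n-1}_{K ⊗_k B} → ((O/mⁿ) ⊗_k B)^* / (K ⊗_k B)^*` sending
`(x₁,…,x_{n-1})` to the class of `1 + Σ_{h=1}^{n-1} t̄ₚʰ · xₕ` is a group isomorphism: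
each such element is a unit, and the map is bijective and sends the Witt operation to
multiplication. -/
theorem quotient_units_iso_witt (hn : 0 < n) (htp : Irreducible tp)
    (hs : ∀ x : O ⧸ IsLocalRing.maximalIdeal O,
      Ideal.Quotient.factor (Ideal.pow_le_self hn.ne') (s x) = x) :
    (∀ x : Fin (n - 1) → ((O ⧸ IsLocalRing.maximalIdeal O) ⊗[k] B),
      IsUnit (wittToUnitElem k O n tp B s x)) ∧
    Function.Bijective (wittToQuot k O n tp B s) ∧
    (∀ x y : Fin (n - 1) → ((O ⧸ IsLocalRing.maximalIdeal O) ⊗[k] B),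
      wittToQuot k O n tp B s (wittOp x y) =
        wittToQuot k O n tp B s x * wittToQuot k O n tp B s y) := by
  -- With `n = m + 1`, the index type `Fin (n - 1)` is definitionally `Fin m`.
  obtain ⟨m, rfl⟩ := Nat.exists_eq_succ_of_ne_zero hn.ne'
  let q := Ideal.Quotient.factorₐ k (Ideal.pow_le_self (I := IsLocalRing.maximalIdeal O) hn.ne')
  let σ := (Algebra.TensorProduct.map s (AlgHom.id k B)).toRingHom
  let π := (Algebra.TensorProduct.map q (AlgHom.id k B)).toRingHom
  let T := Ideal.Quotient.mk (IsLocalRing.maximalIdeal O ^ (m + 1)) tp ⊗ₜ[k] (1 : B)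
  have hT : T ^ (m + 1) = 0 := by
    rw [Algebra.TensorProduct.tmul_pow, mk_pow_eq_zero htp, TensorProduct.zero_tmul]
  have hπσ : ∀ a, π (σ a) = a := fun a => by
    have hqs : q.comp s = AlgHom.id k _ := AlgHom.ext hs
    simp [π, σ, ← AlgHom.comp_apply, ← Algebra.TensorProduct.map_comp, hqs]
  have hπT : π T = 0 := by simp [π, T, q, factor_mk_eq_zero hn.ne' htp]
  have hbasis : Function.Bijective (adicExpansion σ T) :=
    bijective_adicExpansion_baseChange s _ (bijective_adicExpansion_mk hn.ne' htp s hs)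
  have helem : wittToUnitElem k O (m + 1) tp B s = wittElem σ T := by
    funext x; simp [wittToUnitElem, wittElem, σ, T, Algebra.TensorProduct.tmul_pow]
  have hquot : wittToQuot k O (m + 1) tp B s = fun x => QuotientGroup.mk (wittUnit σ T hT x) := by
    funext x
    rw [wittToQuot, dif_pos (helem ▸ isUnit_wittElem σ T ⟨_, hT⟩ x)]
    exact congrArg _ (Units.ext (congrFun helem x))
  refine ⟨fun x => helem ▸ isUnit_wittElem σ T ⟨_, hT⟩ x, ?_, fun x y => ?_⟩
  · rw [hquot]
    exact bijective_mk_wittUnit hT hbasis π hπσ hπT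
  · simp only [hquot, wittUnit_wittOp, QuotientGroup.mk_mul]

end
end

section
/- Let F be a field with discrete valuation v and tame symbol d_v. If x, y ∈ F^* satisfy x + y = 1, then d_v(x, y) = 1 (the Steinberg relation). -/
/-!
The ultrametric inequality applied to `x + y = 1` leaves three cases: `v x < 1 = v y`,
`v y < 1 = v x`, or `1 ≤ v x = v y`. With `a = intVal v x`, `b = intVal v y`, the representative
`(-1)^(ab) x^b / y^a` of the symbol is then `(y⁻¹)^a`, `x^b` or `(-x/y)^a`, a power of
`y⁻¹ = 1 + x/y`, `x = 1 - y` or `-x/y = 1 - y⁻¹` respectively. These are principal units,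
which form a group and reduce to `1` in the residue field.
-/

open scoped Classical

/-- The integer value of a (discrete, `ℤₘ₀ = WithZero (Multiplicative ℤ)`-valued)
valuation at a nonzero element. -/
noncomputable def intVal {F : Type*} [Field F]
    (v : Valuation F (WithZero (Multiplicative ℤ))) (x : F) : ℤ :=
  if h : v x = 0 then 0 else Multiplicative.toAdd (WithZero.unzero h)

/-- The Milnor tame symbol `d_v(x,y) = (-1)^{v(x)v(y)} · x^{v(y)}/y^{v(x)} mod p_v`,
as an element of the residue field `k_v` of the valuation ring `A_v` of `v`
(junk value `0` if the representative does not lie in `A_v`, which never happens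
for nonzero `x, y`). -/
noncomputable def tameSymbol {F : Type*} [Field F]
    (v : Valuation F (WithZero (Multiplicative ℤ))) (x y : F) :
    IsLocalRing.ResidueField v.valuationSubring :=
  if h : ((-1 : F) ^ (intVal v x * intVal v y) * x ^ intVal v y / y ^ intVal v x)
      ∈ v.valuationSubring
  then IsLocalRing.residue _ ⟨_, h⟩ else 0

namespace Valuation

variable {F Γ₀ : Type*} [Field F] [LinearOrderedCommGroupWithZero Γ₀] (v : Valuation F Γ₀)

theorem map_eq_one_of_map_sub_one_lt {u : F} (h : v (u - 1) < 1) : v u = 1 := by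
  simpa using v.map_one_add_of_lt h

theorem map_zpow_sub_one_lt {u : F} (h : v (u - 1) < 1) (n : ℤ) : v (u ^ n - 1) < 1 := by
  have hu : u ≠ 0 := v.ne_zero_iff.mp (by simp [v.map_eq_one_of_map_sub_one_lt h])
  have hmem : Units.mk0 u hu ∈ v.valuationSubring.principalUnitGroup := by
    rwa [ValuationSubring.mem_principalUnitGroup_iff, Units.val_mk0,
      ← (isEquiv_valuation_valuationSubring v).lt_one_iff_lt_one]
  have := v.valuationSubring.principalUnitGroup.zpow_mem hmem n
  rwa [ValuationSubring.mem_principalUnitGroup_iff, Units.val_zpow_eq_zpow_val, Units.val_mk0,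
    ← (isEquiv_valuation_valuationSubring v).lt_one_iff_lt_one] at this

theorem residue_eq_one_of_map_sub_one_lt {z : F} (hz : z ∈ v.valuationSubring)
    (h : v (z - 1) < 1) : IsLocalRing.residue _ (⟨z, hz⟩ : v.valuationSubring) = 1 := by
  have hz1 : (⟨z, hz⟩ - 1 : v.valuationSubring) ∈ IsLocalRing.maximalIdeal _ := by
    rw [ValuationSubring.valuation_lt_one_iff]
    exact (isEquiv_valuation_valuationSubring v).lt_one_iff_lt_one.mp h
  rwa [← IsLocalRing.residue_eq_zero_iff, _root_.map_sub, _root_.map_one, sub_eq_zero] at hz1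

theorem map_eq_of_add_eq_one {x y : F} (hxy : x + y = 1) (hx : 1 ≤ v x) (hy : 1 ≤ v y) :
    v x = v y := by
  by_contra hne
  have hmax := v.map_add_of_distinct_val hne
  rw [hxy, v.map_one] at hmax
  exact hne <| (((le_max_left _ _).trans hmax.ge).antisymm hx).trans
    (((le_max_right _ _).trans hmax.ge).antisymm hy).symm

end Valuation

theorem neg_one_zpow_mul_self {α : Type*} [DivisionMonoid α] [HasDistribNeg α] (n : ℤ) :
    (-1 : α) ^ (n * n) = (-1) ^ n := by
  rcases Int.even_or_odd n with hn | hn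
  · rw [hn.neg_one_zpow, (hn.mul_right _).neg_one_zpow]
  · rw [hn.neg_one_zpow, (hn.mul hn).neg_one_zpow]

section

variable {F : Type*} [Field F] (v : Valuation F (WithZero (Multiplicative ℤ)))

theorem intVal_congr {x y : F} (h : v x = v y) : intVal v x = intVal v y := by
  simp only [intVal, h]

theorem intVal_eq_zero_of_map_eq_one {x : F} (h : v x = 1) : intVal v x = 0 := by
  simp only [intVal, h, one_ne_zero, dite_false]
  rfl

theorem tameSymbol_eq_one_of_map_sub_one_lt {x y : F}
    (h : v ((-1) ^ (intVal v x * intVal v y) * x ^ intVal v y / y ^ intVal v x - 1) < 1) :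
    tameSymbol v x y = 1 := by
  have hmem : _ ∈ v.valuationSubring := (v.map_eq_one_of_map_sub_one_lt h).le
  rw [tameSymbol, dif_pos hmem]
  exact v.residue_eq_one_of_map_sub_one_lt hmem h

variable {v} {x y : F}

theorem tameSymbol_eq_one_of_map_left_lt_one (hxy : x + y = 1) (hx : v x < 1) :
    tameSymbol v x y = 1 := by
  have hy : v y = 1 := by
    rw [eq_sub_of_add_eq' hxy]
    exact v.map_one_sub_of_lt hx
  have hy0 : y ≠ 0 := v.ne_zero_iff.mp (by simp [hy])
  apply tameSymbol_eq_one_of_map_sub_one_lt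
  rw [intVal_eq_zero_of_map_eq_one v hy, mul_zero, zpow_zero, zpow_zero, one_mul, one_div,
    ← inv_zpow]
  refine v.map_zpow_sub_one_lt ?_ _
  have : y⁻¹ - 1 = x / y := by
    field_simp
    linear_combination -hxy
  rwa [this, map_div₀, hy, div_one]

theorem tameSymbol_eq_one_of_map_right_lt_one (hxy : x + y = 1) (hy : v y < 1) :
    tameSymbol v x y = 1 := by
  have hx : v x = 1 := by
    rw [eq_sub_of_add_eq hxy]
    exact v.map_one_sub_of_lt hy
  apply tameSymbol_eq_one_of_map_sub_one_lt
  rw [intVal_eq_zero_of_map_eq_one v hx, zero_mul, zpow_zero, zpow_zero, one_mul, div_one]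
  refine v.map_zpow_sub_one_lt ?_ _
  rwa [← neg_sub, ← eq_sub_of_add_eq' hxy, Valuation.map_neg]

theorem tameSymbol_eq_one_of_one_le_map (hxy : x + y = 1) (hx : 1 ≤ v x) (hy : 1 ≤ v y) :
    tameSymbol v x y = 1 := by
  have hvxy := v.map_eq_of_add_eq_one hxy hx hy
  have hy0 : y ≠ 0 := v.ne_zero_iff.mp (ne_bot_of_gt (zero_lt_one.trans_le hy))
  have hrep : (-1 : F) ^ (intVal v x * intVal v y) * x ^ intVal v y / y ^ intVal v x
      = (-x / y) ^ intVal v x := by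
    rw [← intVal_congr v hvxy, neg_one_zpow_mul_self, div_zpow, ← neg_one_mul x, mul_zpow]
  apply tameSymbol_eq_one_of_map_sub_one_lt
  rw [hrep]
  rcases hy.eq_or_lt with hy1 | hy1
  · rw [intVal_eq_zero_of_map_eq_one v (hvxy.trans hy1.symm), zpow_zero, sub_self, v.map_zero]
    exact zero_lt_one
  · refine v.map_zpow_sub_one_lt ?_ _
    have : -x / y - 1 = -y⁻¹ := by
      field_simp
      linear_combination -hxy
    rwa [this, Valuation.map_neg, map_inv₀, inv_lt_one₀ (zero_lt_one.trans hy1)]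

end

theorem tameSymbol_steinberg_general {F : Type*} [Field F]
    (v : Valuation F (WithZero (Multiplicative ℤ)))
    (x y : F) (hxy : x + y = 1) :
    tameSymbol v x y = 1 := by
  by_cases hx : v x < 1
  · exact tameSymbol_eq_one_of_map_left_lt_one hxy hx
  by_cases hy : v y < 1
  · exact tameSymbol_eq_one_of_map_right_lt_one hxy hy
  exact tameSymbol_eq_one_of_one_le_map hxy (not_lt.mp hx) (not_lt.mp hy)

/-- The Steinberg relation: if `x + y = 1` with `x, y ∈ F^*`, then `d_v(x, y) = 1`. -/
theorem tameSymbol_steinberg {F : Type*} [Field F]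
    (v : Valuation F (WithZero (Multiplicative ℤ))) (hv : Function.Surjective v)
    (x y : F) (hx : x ≠ 0) (hy : y ≠ 0) (hxy : x + y = 1) :
    tameSymbol v x y = 1 :=
  tameSymbol_steinberg_general v x y hxy
end

section
/- Let k be a field of characteristic 0 and B a local artinian finite-dimensional k-algebra with maximal ideal m. Every unit u of the Laurent series field-like ring B((z)) with 'valuation' n (i.e. u = z^n·ε with ε ∈ B⟦z⟧^* having unit constant coefficient, modulo nilpotent lower-order terms) can be written uniquely as u = λ zⁿ · P₋ · P₊ where λ ∈ B^*, P₋ = ∏_{i=1}^{l}(1 - a₋ᵢ z^{-i}) with a₋ᵢ ∈ m nilpotent, and P₊ = ∏_{i=1}^{∞}(1 - aᵢ zⁱ) with aᵢ ∈ B. In particular, the group B((z))^* decomposes as ℤ × B^* × Γ₋(B) × Γ₊(B). -/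
/-!
The first coefficient of `u` outside the maximal ideal `𝔪` is a unit; if its index is `n`, then
`z⁻ⁿ u = q (1 + h)` with `q` an invertible power series and `h` with all coefficients in `𝔪`.
Splitting `h = s + r` into its parts of negative and nonnegative degree,
`1 + h = (1 + s) (1 + r) (1 + e)` with `1 + s ∈ Γ₋`, `1 + r` an invertible power series and
`e = -((1 + s) (1 + r))⁻¹ s r`, whose coefficients lie in `I²` when those of `h` lie in `I`.
Since `𝔪` is nilpotent, induction on the exponent factors `1 + h`.

For uniqueness, `Γ₋` and `Γ₊` are groups (the inverse of `P ∈ Γ₋` is the finite geometric series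
`∑ (1 - P)ᵏ`), so it suffices that `a zⁿ P = a' zⁿ' Q` with `P ∈ Γ₋`, `Q ∈ Γ₊` forces `n = n'`,
`a = a'` and `P = Q = 1`; comparing the coefficients in degrees `n` and `n'` works because a unit
is neither `0` nor in `𝔪`.
-/

open Finset

theorem Ideal.le_nilradical_of_isNilpotent {R : Type*} [CommSemiring R] {I : Ideal R}
    (hI : IsNilpotent I) : I ≤ nilradical R :=
  fun _ hx ↦ let ⟨n, hn⟩ := hI; ⟨n, hn ▸ Ideal.pow_mem_pow hx n⟩

namespace HahnSeries

variable {Γ R : Type*} [AddCommMonoid Γ]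

section PartialOrder

variable [PartialOrder Γ] [IsOrderedCancelAddMonoid Γ] [CommSemiring R]

def coeffIdeal (I : Ideal R) : Ideal (HahnSeries Γ R) where
  carrier := {f | ∀ i, f.coeff i ∈ I}
  add_mem' hf hg i := by rw [coeff_add]; exact I.add_mem (hf i) (hg i)
  zero_mem' _ := I.zero_mem
  smul_mem' c f hf i := by
    rw [smul_eq_mul, coeff_mul]
    exact I.sum_mem fun _ _ ↦ I.mul_mem_left _ (hf _)

variable {I J : Ideal R}

theorem coeffIdeal_mono (h : I ≤ J) : (coeffIdeal I : Ideal (HahnSeries Γ R)) ≤ coeffIdeal J :=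
  fun _ hf i ↦ h (hf i)

theorem coeffIdeal_mul_le (I J : Ideal R) :
    coeffIdeal I * coeffIdeal J ≤ (coeffIdeal (I * J) : Ideal (HahnSeries Γ R)) :=
  Ideal.mul_le.2 fun f hf g hg i ↦ by
    rw [coeff_mul]
    exact sum_mem fun _ _ ↦ Ideal.mul_mem_mul (hf _) (hg _)

theorem coeffIdeal_pow_le (I : Ideal R) (n : ℕ) :
    coeffIdeal I ^ n ≤ (coeffIdeal (I ^ n) : Ideal (HahnSeries Γ R)) := by
  induction n with
  | zero => simp only [pow_zero, Ideal.one_eq_top]; exact fun _ _ _ ↦ Submodule.mem_top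
  | succ n ih =>
    rw [pow_succ, pow_succ]
    exact (Ideal.mul_mono_left ih).trans (coeffIdeal_mul_le _ _)

theorem coeffIdeal_bot : (coeffIdeal ⊥ : Ideal (HahnSeries Γ R)) = ⊥ :=
  eq_bot_iff.2 fun _ hf ↦ (Ideal.mem_bot).2 (HahnSeries.ext (funext hf))

theorem isNilpotent_coeffIdeal (hI : IsNilpotent I) :
    IsNilpotent (coeffIdeal I : Ideal (HahnSeries Γ R)) :=
  let ⟨n, hn⟩ := hI
  ⟨n, eq_bot_iff.2 <| (coeffIdeal_pow_le I n).trans (by rw [hn]; exact coeffIdeal_bot.le)⟩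

end PartialOrder

section LinearOrder

variable [LinearOrder Γ] [IsOrderedCancelAddMonoid Γ]

section CommSemiring

variable [CommSemiring R] {I : Ideal R} {f : HahnSeries Γ R}

theorem truncLT_mem_coeffIdeal (c : Γ) (hf : f ∈ coeffIdeal I) : truncLT c f ∈ coeffIdeal I := by
  intro i
  rw [HahnSeries.coeff_truncLT]
  split_ifs
  exacts [hf i, I.zero_mem]

open IsLocalRing in
theorem exists_isUnit_coeff_of_isUnit [IsLocalRing R] {x : HahnSeries Γ R}
    (hx : IsUnit x) : ∃ n, IsUnit (x.coeff n) ∧ ∀ i < n, x.coeff i ∈ maximalIdeal R := by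
  set S := {i | x.coeff i ∉ maximalIdeal R}
  have hS : S.IsWF := x.isWF_support.mono fun i hi h0 ↦ hi (h0 ▸ zero_mem _)
  have hne : S.Nonempty := by
    by_contra hempty
    have hx_mem : x ∈ coeffIdeal (maximalIdeal R) := fun i ↦ by_contra fun hi ↦ hempty ⟨i, hi⟩
    have h1 := (Ideal.eq_top_iff_one _).1 (Ideal.eq_top_of_isUnit_mem _ hx_mem hx) 0
    rw [coeff_one, if_pos rfl] at h1
    exact (maximalIdeal.isMaximal R).ne_top ((Ideal.eq_top_iff_one _).2 h1)
  refine ⟨hS.min hne, notMem_maximalIdeal.1 (hS.min_mem hne), fun i hi ↦ of_not_not fun h ↦ ?_⟩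
  exact hS.not_lt_min hne h hi

end CommSemiring

variable [CommRing R]

variable (Γ R) in
def nonposSubring : Subring (HahnSeries Γ R) where
  carrier := {f | ∀ i, 0 < i → f.coeff i = 0}
  mul_mem' {f g} hf hg i hi := by
    rw [coeff_mul]
    refine sum_eq_zero fun ⟨a, b⟩ hab ↦ ?_
    obtain ⟨-, -, rfl⟩ := mem_antidiagonal.1 hab
    by_cases ha : 0 < a
    · rw [hf a ha, zero_mul]
    · have hb : 0 < b := by
        by_contra hb
        exact (add_nonpos (not_lt.1 ha) (not_lt.1 hb)).not_gt hi
      rw [hg b hb, mul_zero]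
  one_mem' i hi := by rw [coeff_one, if_neg hi.ne']
  add_mem' hf hg i hi := by rw [coeff_add, hf i hi, hg i hi, add_zero]
  zero_mem' _ _ := rfl
  neg_mem' hf i hi := by rw [coeff_neg, hf i hi, neg_zero]

theorem coeff_zero_mul_of_mem_nonposSubring {f g : HahnSeries Γ R} (hf : f ∈ nonposSubring Γ R)
    (hg : g ∈ nonposSubring Γ R) : (f * g).coeff 0 = f.coeff 0 * g.coeff 0 := by
  have nonpos {h : HahnSeries Γ R} (hh : h ∈ nonposSubring Γ R) {i} (hi : i ∈ h.support) : i ≤ 0 :=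
    not_lt.1 fun hpos ↦ hi (hh i hpos)
  rw [coeff_mul, sum_eq_single (0, 0)]
  · rintro ⟨a, b⟩ hab hne
    obtain ⟨ha, hb, hab⟩ := mem_antidiagonal.1 hab
    have ha0 : a = 0 := le_antisymm (nonpos hf ha) (hab ▸ add_le_of_nonpos_right (nonpos hg hb))
    subst ha0
    exact (hne (Prod.ext rfl (zero_add b ▸ hab))).elim
  · intro h
    by_contra hne
    exact h (mem_antidiagonal.2 ⟨left_ne_zero_of_mul hne, right_ne_zero_of_mul hne, add_zero 0⟩)

theorem truncLT_zero_mem_nonposSubring (f : HahnSeries Γ R) : truncLT 0 f ∈ nonposSubring Γ R :=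
  fun _ hi ↦ coeff_truncLT_of_le hi.le f

end LinearOrder

end HahnSeries

namespace LaurentSeries

open HahnSeries

variable {R : Type*} [CommRing R] {I J : Ideal R}

theorem truncLT_add_coe_mk (f : LaurentSeries R) :
    truncLT 0 f + ((PowerSeries.mk fun n ↦ f.coeff n : PowerSeries R) : LaurentSeries R) = f := by
  ext i
  rw [coeff_add, HahnSeries.coeff_truncLT, PowerSeries.coeff_coe]
  split_ifs with hi
  · rw [add_zero]
  · rw [zero_add, PowerSeries.coeff_mk, Int.natAbs_of_nonneg (not_lt.1 hi)]

theorem coeff_coe_zero (q : PowerSeries R) :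
    (q : LaurentSeries R).coeff 0 = PowerSeries.constantCoeff q := by
  simpa using coeff_coe_powerSeries q 0

variable (I) in
def gammaMinus : Submonoid (LaurentSeries R) where
  carrier := {P | P ∈ nonposSubring ℤ R ∧ P.coeff 0 = 1 ∧ P - 1 ∈ coeffIdeal I}
  one_mem' := ⟨one_mem _, by rw [coeff_one, if_pos rfl], by rw [sub_self]; exact zero_mem _⟩
  mul_mem' := by
    rintro P Q ⟨hP, hP0, hPI⟩ ⟨hQ, hQ0, hQI⟩
    refine ⟨mul_mem hP hQ, ?_, ?_⟩
    · rw [coeff_zero_mul_of_mem_nonposSubring hP hQ, hP0, hQ0, one_mul]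
    · rw [show P * Q - 1 = (P - 1) * Q + (Q - 1) by ring]
      exact add_mem (Ideal.mul_mem_right _ _ hPI) hQI

theorem mem_gammaMinus_iff {P : LaurentSeries R} : P ∈ gammaMinus I ↔
    P.coeff 0 = 1 ∧ (∀ i, 0 < i → P.coeff i = 0) ∧ ∀ i < 0, P.coeff i ∈ I := by
  refine ⟨fun ⟨hP, hP0, hPI⟩ ↦ ⟨hP0, hP, fun i hi ↦ ?_⟩, fun ⟨hP0, hP, hPI⟩ ↦ ⟨hP, hP0, fun i ↦ ?_⟩⟩
  · simpa [coeff_one, hi.ne] using hPI i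
  · rw [coeff_sub, coeff_one]
    rcases lt_trichotomy i 0 with hi | rfl | hi
    · rw [if_neg hi.ne, sub_zero]; exact hPI i hi
    · rw [if_pos rfl, hP0, sub_self]; exact I.zero_mem
    · rw [if_neg hi.ne', hP i hi, sub_zero]; exact I.zero_mem

theorem exists_mul_eq_one_of_mem_gammaMinus (hI : IsNilpotent I) {P : LaurentSeries R}
    (hP : P ∈ gammaMinus I) : ∃ P' ∈ gammaMinus I, P * P' = 1 := by
  obtain ⟨hPS, hP0, hPI⟩ := hP
  have hs : 1 - P ∈ coeffIdeal I := by rw [← neg_sub]; exact neg_mem hPI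
  obtain ⟨N, hN⟩ := Ideal.le_nilradical_of_isNilpotent (isNilpotent_coeffIdeal hI) hs
  set P' := ∑ k ∈ Finset.range N, (1 - P) ^ k
  have hPP' : P * P' = 1 := by
    have h := mul_neg_geom_sum (1 - P) N
    rwa [hN, sub_zero, sub_sub_cancel] at h
  have hP'S : P' ∈ nonposSubring ℤ R :=
    sum_mem fun k _ ↦ pow_mem (sub_mem (one_mem _) hPS) k
  refine ⟨P', ⟨hP'S, ?_, ?_⟩, hPP'⟩
  · have h := congrArg (coeff · 0) hPP'
    simpa [coeff_zero_mul_of_mem_nonposSubring hPS hP'S, hP0] using h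
  · rw [show P' - 1 = (1 - P) * P' by linear_combination hPP']
    exact Ideal.mul_mem_right _ _ hs

variable (R) in
noncomputable def gammaPlus : Submonoid (LaurentSeries R) :=
  (MonoidHom.mker (PowerSeries.constantCoeff (R := R))).map (ofPowerSeries ℤ R)

theorem mem_gammaPlus_iff {Q : LaurentSeries R} :
    Q ∈ gammaPlus R ↔ Q.coeff 0 = 1 ∧ ∀ i < 0, Q.coeff i = 0 := by
  refine ⟨?_, fun ⟨hQ0, hQ⟩ ↦ ⟨PowerSeries.mk fun n ↦ Q.coeff n, ?_, ?_⟩⟩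
  · rintro ⟨q, hq, rfl⟩
    exact ⟨(coeff_coe_zero q).trans hq, fun i hi ↦ by rw [PowerSeries.coeff_coe, if_pos hi]⟩
  · simpa using hQ0
  · have hQ' : truncLT 0 Q = 0 := by
      ext i
      by_cases hi : i < 0 <;> simp [hi, hQ]
    simpa [hQ'] using truncLT_add_coe_mk Q

theorem exists_mul_eq_one_of_mem_gammaPlus {Q : LaurentSeries R} (hQ : Q ∈ gammaPlus R) :
    ∃ Q' ∈ gammaPlus R, Q * Q' = 1 := by
  obtain ⟨q, hq, rfl⟩ := hQ
  refine ⟨_, ⟨q.invOfUnit 1, ?_, rfl⟩, ?_⟩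
  · simp
  · rw [← map_mul, q.mul_invOfUnit 1 (by simpa using hq), map_one]


variable (R) in
noncomputable def powerSeriesUnits : Submonoid (LaurentSeries R) :=
  (IsUnit.submonoid (PowerSeries R)).map (ofPowerSeries ℤ R)

theorem isUnit_of_mem_gammaMinus_sup (hI : IsNilpotent I) {f : LaurentSeries R}
    (hf : f ∈ gammaMinus I ⊔ powerSeriesUnits R) : IsUnit f := by
  obtain ⟨P, hP, _, ⟨w, hw, rfl⟩, rfl⟩ := Submonoid.mem_sup.1 hf
  obtain ⟨P', -, hPP'⟩ := exists_mul_eq_one_of_mem_gammaMinus hI hP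
  exact (IsUnit.of_mul_eq_one P' hPP').mul (hw.map _)

theorem one_add_mem_gammaMinus_sup_of_coeffIdeal_mul (hI : IsNilpotent I) (hJ : J ≤ I)
    (ih : ∀ e ∈ coeffIdeal (J * J), 1 + e ∈ gammaMinus I ⊔ powerSeriesUnits R)
    {h : LaurentSeries R} (hh : h ∈ coeffIdeal J) :
    1 + h ∈ gammaMinus I ⊔ powerSeriesUnits R := by
  set s := truncLT 0 h
  set p : PowerSeries R := PowerSeries.mk fun n ↦ h.coeff n
  have hsp : s + p = h := truncLT_add_coe_mk h
  have hs : s ∈ coeffIdeal J := truncLT_mem_coeffIdeal 0 hh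
  have hp : (p : LaurentSeries R) ∈ coeffIdeal J := by
    rw [← add_sub_cancel_left s p, hsp]; exact sub_mem hh hs
  have hU : (1 + s) * ↑(1 + p) ∈ gammaMinus I ⊔ powerSeriesUnits R := by
    refine Submonoid.mul_mem_sup ⟨add_mem (one_mem _) (truncLT_zero_mem_nonposSubring h), ?_, ?_⟩
      ⟨1 + p, ?_, rfl⟩
    · simp [s]
    · simpa using coeffIdeal_mono hJ hs
    · have h0 : IsNilpotent (h.coeff 0) :=
        mem_nilradical.1 (Ideal.le_nilradical_of_isNilpotent hI (hJ (hh 0)))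
      exact PowerSeries.isUnit_iff_constantCoeff.2 (by simpa [p] using h0.isUnit_one_add)
  obtain ⟨U, hU'⟩ := isUnit_of_mem_gammaMinus_sup hI hU
  have he : -(↑U⁻¹ * (s * p)) ∈ coeffIdeal (J * J) :=
    neg_mem (Ideal.mul_mem_left _ _ (coeffIdeal_mul_le J J (Ideal.mul_mem_mul hs hp)))
  have key : 1 + h = U * (1 + -(↑U⁻¹ * (s * p))) := by
    rw [map_add, map_one] at hU'
    linear_combination (s * p) * U.mul_inv - hU' - hsp
  rw [key]
  exact mul_mem (hU'.symm ▸ hU) (ih _ he)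

theorem one_add_mem_gammaMinus_sup (hI : IsNilpotent I) {h : LaurentSeries R}
    (hh : h ∈ coeffIdeal I) : 1 + h ∈ gammaMinus I ⊔ powerSeriesUnits R := by
  obtain ⟨N, hN⟩ := hI
  suffices ∀ d j, I ^ (j + 1 + d) = ⊥ → ∀ h ∈ coeffIdeal (I ^ (j + 1)),
      1 + h ∈ gammaMinus I ⊔ powerSeriesUnits R from
    this N 0 (eq_bot_iff.2 <| (Ideal.pow_le_pow_right (by omega)).trans hN.le) h (by simpa using hh)
  intro d
  induction d with
  | zero =>
    intro j hj h hh
    rw [add_zero] at hj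
    rw [hj, coeffIdeal_bot, Ideal.mem_bot] at hh
    rw [hh, add_zero]
    exact one_mem _
  | succ d ih =>
    intro j hj h hh
    refine one_add_mem_gammaMinus_sup_of_coeffIdeal_mul ⟨N, hN⟩ (Ideal.pow_le_self (by omega))
      (fun e he ↦ ?_) hh
    refine ih (j + 1) (by rwa [add_right_comm, add_assoc]) e (coeffIdeal_mono ?_ he)
    rw [← _root_.pow_add]
    exact Ideal.pow_le_pow_right (by omega)

theorem mem_gammaMinus_sup_of_isUnit_coeff_zero (hI : IsNilpotent I) {v : LaurentSeries R}
    (hv0 : IsUnit (v.coeff 0)) (hv : ∀ i < 0, v.coeff i ∈ I) :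
    v ∈ gammaMinus I ⊔ powerSeriesUnits R := by
  set w : PowerSeries R := PowerSeries.mk fun n ↦ v.coeff n
  have hw : IsUnit w := PowerSeries.isUnit_iff_constantCoeff.2 (by simpa [w] using hv0)
  obtain ⟨W, hW⟩ := hw.map (ofPowerSeries ℤ R)
  have htrunc : truncLT 0 v ∈ coeffIdeal I := fun i ↦ by
    rw [HahnSeries.coeff_truncLT]
    split_ifs with hi
    exacts [hv i hi, I.zero_mem]
  have key : v = W * (1 + ↑W⁻¹ * truncLT 0 v) := by
    linear_combination (-truncLT 0 v) * W.mul_inv - truncLT_add_coe_mk v - hW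
  rw [key]
  exact mul_mem (Submonoid.mem_sup_right ⟨w, hw, hW.symm⟩)
    (one_add_mem_gammaMinus_sup hI (Ideal.mul_mem_left _ _ htrunc))

open IsLocalRing in
theorem exists_eq_single_mul_mul [IsLocalRing R] (hm : IsNilpotent (maximalIdeal R))
    {u : LaurentSeries R} (hu : IsUnit u) : ∃ n : ℤ, ∃ c : Rˣ, ∃ P ∈ gammaMinus (maximalIdeal R),
      ∃ Q ∈ gammaPlus R, u = single n (c : R) * P * Q := by
  obtain ⟨n, hn, hlt⟩ := exists_isUnit_coeff_of_isUnit hu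
  have hv : ∀ i, (single (-n) (1 : R) * u).coeff i = u.coeff (i + n) := fun i ↦ by
    rw [coeff_single_mul, one_mul, sub_neg_eq_add]
  obtain ⟨P, hP, _, ⟨w, hw, rfl⟩, hPw⟩ := Submonoid.mem_sup.1 <|
    mem_gammaMinus_sup_of_isUnit_coeff_zero hm (by rwa [hv, zero_add])
      fun i hi ↦ by rw [hv]; exact hlt _ (by omega)
  obtain ⟨c, hc⟩ := hw.map PowerSeries.constantCoeff
  refine ⟨n, c, P, hP, ↑(PowerSeries.C (↑c⁻¹ : R) * w), ⟨_, ?_, rfl⟩, ?_⟩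
  · simp [MonoidHom.mem_mker, ← hc]
  · have h1 : single n (1 : R) * single (-n) 1 = 1 := by simp [single_mul_single]
    have h2 : single n (c : R) * HahnSeries.C (↑c⁻¹ : R) = single n 1 := by
      simp [C_apply, single_mul_single]
    rw [map_mul, PowerSeries.coe_C]
    linear_combination (-(P * ↑w)) * h2 - single n (1 : R) * hPw - u * h1

theorem eq_one_of_single_mul_eq_single_mul (hI : I ≠ ⊤) {n n' : ℤ} {a a' : Rˣ}
    {P Q : LaurentSeries R} (hP : P ∈ gammaMinus I) (hQ : Q ∈ gammaPlus R)
    (h : single n (a : R) * P = single n' (a' : R) * Q) : n = n' ∧ a = a' ∧ P = 1 ∧ Q = 1 := by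
  obtain ⟨hP0, hPpos, hPneg⟩ := mem_gammaMinus_iff.1 hP
  obtain ⟨hQ0, hQneg⟩ := mem_gammaPlus_iff.1 hQ
  have hc : ∀ i, (a : R) * P.coeff (i - n) = a' * Q.coeff (i - n') := fun i ↦ by
    simpa only [coeff_single_mul] using congrArg (coeff · i) h
  rcases lt_trichotomy n n' with hlt | rfl | hgt
  · have ha := hc n
    rw [sub_self, hP0, mul_one, hQneg _ (by omega), mul_zero] at ha
    exact absurd (Ideal.eq_top_of_isUnit_mem _ I.zero_mem (ha ▸ a.isUnit)) hI
  · have hPQ : ∀ j, (a : R) * P.coeff j = a' * Q.coeff j := fun j ↦ by simpa using hc (j + n)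
    obtain rfl : a = a' := Units.ext (by simpa [hP0, hQ0] using hPQ 0)
    obtain rfl : P = Q := HahnSeries.ext (funext fun j ↦ (Units.mul_right_inj a).1 (hPQ j))
    have hP1 : P = 1 := by
      ext j
      rcases lt_trichotomy j 0 with hj | rfl | hj
      · rw [hQneg j hj, coeff_one, if_neg hj.ne]
      · rw [hP0, coeff_one, if_pos rfl]
      · rw [hPpos j hj, coeff_one, if_neg hj.ne']
    exact ⟨rfl, rfl, hP1, hP1⟩
  · have ha' := hc n'
    rw [sub_self, hQ0, mul_one] at ha'
    exact absurd (Ideal.eq_top_of_isUnit_mem _ (ha' ▸ I.mul_mem_left _ (hPneg _ (by omega)))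
      a'.isUnit) hI

theorem eq_of_single_mul_mul_eq (hI : IsNilpotent I) (hI' : I ≠ ⊤) {n n' : ℤ} {a a' : Rˣ}
    {P P' Q Q' : LaurentSeries R} (hP : P ∈ gammaMinus I) (hP' : P' ∈ gammaMinus I)
    (hQ : Q ∈ gammaPlus R) (hQ' : Q' ∈ gammaPlus R)
    (h : single n (a : R) * P * Q = single n' (a' : R) * P' * Q') :
    n = n' ∧ a = a' ∧ P = P' ∧ Q = Q' := by
  obtain ⟨P'', hP'', hPP''⟩ := exists_mul_eq_one_of_mem_gammaMinus hI hP'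
  obtain ⟨Q'', hQ'', hQQ''⟩ := exists_mul_eq_one_of_mem_gammaPlus hQ
  have key : single n (a : R) * (P * P'') = single n' (a' : R) * (Q' * Q'') := by
    linear_combination (P'' * Q'') * h - (single n (a : R) * P * P'') * hQQ'' +
      (single n' (a' : R) * Q' * Q'') * hPP''
  obtain ⟨rfl, rfl, hP1, hQ1⟩ :=
    eq_one_of_single_mul_eq_single_mul hI' (mul_mem hP hP'') (mul_mem hQ' hQ'') key
  exact ⟨rfl, rfl, by linear_combination P' * hP1 - P * hPP'',
    by linear_combination Q' * hQQ'' - Q * hQ1⟩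

end LaurentSeries

theorem laurentSeries_units_decomposition_general
    (B : Type*) [CommRing B] [IsLocalRing B] [IsArtinianRing B]
    (u : (LaurentSeries B)ˣ) :
    ∃! t : ℤ × Bˣ × LaurentSeries B × LaurentSeries B,
      -- `P₋ ∈ Γ₋(B)`
      (t.2.2.1.coeff 0 = 1 ∧ (∀ i : ℤ, 0 < i → t.2.2.1.coeff i = 0) ∧
        (∀ i : ℤ, i < 0 → IsNilpotent (t.2.2.1.coeff i))) ∧
      -- `P₊ ∈ Γ₊(B)`
      (t.2.2.2.coeff 0 = 1 ∧ (∀ i : ℤ, i < 0 → t.2.2.2.coeff i = 0)) ∧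
      -- the decomposition `u = λ zⁿ · P₋ · P₊`
      (u : LaurentSeries B) =
        HahnSeries.single t.1 ((t.2.1 : B)) * t.2.2.1 * t.2.2.2 := by
  have hm : IsNilpotent (IsLocalRing.maximalIdeal B) :=
    Ring.KrullDimLE.nilradical_eq_maximalIdeal B ▸ IsNoetherianRing.isNilpotent_nilradical B
  have hnil (b : B) : IsNilpotent b ↔ b ∈ IsLocalRing.maximalIdeal B :=
    Ring.KrullDimLE.isNilpotent_iff_mem_maximalIdeal
  obtain ⟨n, c, P, hP, Q, hQ, hu⟩ := LaurentSeries.exists_eq_single_mul_mul hm u.isUnit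
  refine ⟨(n, c, P, Q), ⟨?_, LaurentSeries.mem_gammaPlus_iff.1 hQ, hu⟩, ?_⟩
  · simpa only [hnil] using LaurentSeries.mem_gammaMinus_iff.1 hP
  · rintro ⟨n', c', P', Q'⟩ ⟨hP', hQ', hu'⟩
    obtain ⟨rfl, rfl, rfl, rfl⟩ := LaurentSeries.eq_of_single_mul_mul_eq hm
      (IsLocalRing.maximalIdeal.isMaximal B).ne_top
      (LaurentSeries.mem_gammaMinus_iff.2 (by simpa only [hnil] using hP')) hP
      (LaurentSeries.mem_gammaPlus_iff.2 hQ') hQ (hu'.symm.trans hu)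
    rfl

/-- Let `k` be a field of characteristic `0` and `B` a local artinian finite-dimensional
`k`-algebra. Every unit `u` of the Laurent series ring `B((z))` can be written uniquely
as `u = λ zⁿ · P₋ · P₊`, where `n ∈ ℤ`, `λ ∈ B^*`, `P₋ ∈ Γ₋(B)` is a Laurent series
supported in degrees `≤ 0` with constant coefficient `1` and nilpotent lower-order
coefficients, and `P₊ ∈ Γ₊(B)` is a power series with constant coefficient `1`.
In particular `B((z))^*` decomposes as `ℤ × B^* × Γ₋(B) × Γ₊(B)`. -/
theorem laurentSeries_units_decomposition (k : Type*) [Field k] [CharZero k]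
    (B : Type*) [CommRing B] [Algebra k B] [IsLocalRing B] [IsArtinianRing B]
    [FiniteDimensional k B]
    (u : (LaurentSeries B)ˣ) :
    ∃! t : ℤ × Bˣ × LaurentSeries B × LaurentSeries B,
      -- `P₋ ∈ Γ₋(B)`
      (t.2.2.1.coeff 0 = 1 ∧ (∀ i : ℤ, 0 < i → t.2.2.1.coeff i = 0) ∧
        (∀ i : ℤ, i < 0 → IsNilpotent (t.2.2.1.coeff i))) ∧
      -- `P₊ ∈ Γ₊(B)`
      (t.2.2.2.coeff 0 = 1 ∧ (∀ i : ℤ, i < 0 → t.2.2.2.coeff i = 0)) ∧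
      -- the decomposition `u = λ zⁿ · P₋ · P₊`
      (u : LaurentSeries B) =
        HahnSeries.single t.1 ((t.2.1 : B)) * t.2.2.1 * t.2.2.2 :=
  laurentSeries_units_decomposition_general B u
end

section
/- Let A be a commutative ring, and let a, b ∈ A with b nilpotent, say b^h = 0. Then for positive integers i, j, the element 1 - a^{j/(i,j)} b^{i/(i,j)} raised to the power (i,j) (where (i,j) = gcd(i,j)) is a unit in A, and moreover in the formal power series ring A⟦z⟧, the product ∏_{i≥1}(1 - aᵢ zⁱ) evaluated against finitely many factors (1 - b₋ⱼ z^{-j}) with b₋ⱼ nilpotent yields, after pairing, a well-defined unit of A: only finitely many of the terms (1 - aᵢ^{j/(i,j)} b₋ⱼ^{i/(i,j)})^{(i,j)} differ from 1. -/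
/-!
Since `b` is nilpotent so is `a^m b^n` for `n ≠ 0`, and `1` minus a nilpotent is a unit.
For finiteness: writing `g = (i, j)`, we have `i = g · (i/g) ≤ j · (i/g)`, so once
`i ≥ j r` the exponent `i/g` is at least `r`, the factor `b^{i/g}` vanishes and the term is `1`.
-/

theorem IsNilpotent.isUnit_one_sub_mul_pow {R : Type*} [CommRing R] {b : R} (hb : IsNilpotent b)
    (a : R) {n : ℕ} (hn : n ≠ 0) : IsUnit (1 - a * b ^ n) :=
  ((Commute.all a _).isNilpotent_mul_left (hb.pow_of_pos hn)).isUnit_one_sub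

theorem Nat.lt_mul_of_div_gcd_lt {i j r : ℕ} (hj : 0 < j) (h : i / i.gcd j < r) : i < j * r :=
  calc i = i.gcd j * (i / i.gcd j) := (Nat.mul_div_cancel' (Nat.gcd_dvd_left i j)).symm
    _ < i.gcd j * r := Nat.mul_lt_mul_of_pos_left h (Nat.gcd_pos_of_pos_right i hj)
    _ ≤ j * r := Nat.mul_le_mul_right r (Nat.gcd_le_right i hj)

theorem finite_setOf_one_sub_mul_pow_div_gcd_ne_one {R : Type*} [CommRing R] (a : ℕ → R)
    {b : R} {r j : ℕ} (hb : b ^ r = 0) (hj : 0 < j) :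
    {i : ℕ | (1 - a i ^ (j / i.gcd j) * b ^ (i / i.gcd j)) ^ i.gcd j ≠ 1}.Finite := by
  refine (Set.finite_Iio (j * r)).subset fun i hne => ?_
  by_contra hge
  have hr : r ≤ i / i.gcd j := not_lt.mp fun h => hge (Nat.lt_mul_of_div_gcd_lt hj h)
  exact hne (by rw [pow_eq_zero_of_le hr hb, mul_zero, sub_zero, one_pow])

/-- Let `A` be a commutative ring and `b ∈ A` nilpotent. Then for positive integers
`i, j`, the element `(1 - a^{j/(i,j)} b^{i/(i,j)})^{(i,j)}` is a unit of `A`; moreover,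
for a sequence `a : ℕ → A` and a nilpotent `b` with `b^r = 0`, only finitely many of
the terms `(1 - aᵢ^{j/(i,j)} b^{i/(i,j)})^{(i,j)}` differ from `1` (indeed
`i/(i,j) < r` forces `i < j·r`), so the doubly indexed product appearing in the
Contou-Carrère symbol is a finite product of units of `A`. -/
theorem contouCarrere_terms_unit_and_finite (A : Type*) [CommRing A] :
    (∀ (a b : A), IsNilpotent b → ∀ i j : ℕ, 0 < i → 0 < j →
      IsUnit ((1 - a ^ (j / Nat.gcd i j) * b ^ (i / Nat.gcd i j)) ^ Nat.gcd i j)) ∧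
    (∀ (a : ℕ → A) (b : A) (r j : ℕ), b ^ r = 0 → 0 < j →
      {i : ℕ | 0 < i ∧
        (1 - (a i) ^ (j / Nat.gcd i j) * b ^ (i / Nat.gcd i j)) ^ Nat.gcd i j ≠ 1}.Finite) ∧
    (∀ (r i j : ℕ), 0 < i → 0 < j → i / Nat.gcd i j < r → i < j * r) := by
  refine ⟨fun a b hb i j hi _ => ?_, fun a b r j hb hj => ?_, fun r i j _ hj => ?_⟩
  · exact (hb.isUnit_one_sub_mul_pow _ (Nat.div_gcd_pos_of_pos_left j hi).ne').pow _
  · exact (finite_setOf_one_sub_mul_pow_div_gcd_ne_one a hb hj).subset fun i hi => hi.2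
  · exact Nat.lt_mul_of_div_gcd_lt hj
end
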